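/- In the timed modal epistemic logic tS4, from the hypothesis K¹φ, where φ = (E₁ ⊻ E₂) ∧ (E₁ → ⋀_{0≤i<10} ¬Kⁱ E₁) ∧ (E₂ → (⋀_{0≤i<20} ¬Kⁱ E₂ ∧ ⋀_{10<i≤20} Kⁱ ¬E₁)), one can derive ⊥; hence tS4 ⊢ ¬K¹φ. -/

import Mathlib

/-- Formulas of timed modal epistemic logic: `K i A` means "`A` is known at
time `i`". -/
inductive Fm : Type
  | atom : ℕ → Fm
  | bot : Fm
  | imp : Fm → Fm → Fm
  | K : ℕ → Fm → Fm

namespace Fm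

def neg (A : Fm) : Fm := imp A bot
def disj (A B : Fm) : Fm := imp (neg A) B
def conj (A B : Fm) : Fm := neg (imp A (neg B))
/-- Exclusive disjunction. -/
def xor' (A B : Fm) : Fm := conj (disj A B) (neg (conj A B))

/-- Big conjunction of a list of formulas. -/
def bigConj (l : List Fm) : Fm := l.foldr conj (neg bot)

end Fm

open Fm

/-- The teacher's announcement `φ` for the two-day Surprise Test Paradox
(announcement at time 0, Friday class at time 10, Wednesday class at time 20):
exactly one of `E₁`, `E₂` holds; if `E₁` then `¬Kⁱ E₁` for all `0 ≤ i < 10`;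
if `E₂` then `¬Kⁱ E₂` for all `0 ≤ i < 20` and `Kⁱ ¬E₁` for all `10 < i ≤ 20`. -/
def phi (E₁ E₂ : Fm) : Fm :=
  conj (xor' E₁ E₂)
    (conj (imp E₁ (bigConj ((List.range 10).map fun i => neg (K i E₁))))
      (imp E₂ (conj (bigConj ((List.range 20).map fun i => neg (K i E₂)))
        (bigConj ((List.range 10).map fun j => K (j + 11) (neg E₁))))))

/-- Provability in the timed modal epistemic logic tS4: tK (propositional
tautologies, axiom tK, monotonicity Mon, rules MP, DE, E) together with
veracity tT: `Kⁱ A → A` and positive introspection t4: `Kⁱ A → Kʲ Kⁱ A` for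
`i < j`. -/
inductive TS4 : Fm → Prop
  | ax1 (A B : Fm) : TS4 (imp A (imp B A))
  | ax2 (A B C : Fm) : TS4 (imp (imp A (imp B C)) (imp (imp A B) (imp A C)))
  | ax3 (A B : Fm) : TS4 (imp (imp (neg A) (neg B)) (imp B A))
  | tk {i j k : ℕ} (hik : i < k) (hjk : j < k) (A B : Fm) :
      TS4 (imp (K i (imp A B)) (imp (K j A) (K k B)))
  | mon {i j : ℕ} (hij : i < j) (A : Fm) : TS4 (imp (K i A) (K j A))
  | tT (i : ℕ) (A : Fm) : TS4 (imp (K i A) A)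
  | t4 {i j : ℕ} (hij : i < j) (A : Fm) : TS4 (imp (K i A) (K j (K i A)))
  | mp {A B : Fm} : TS4 (imp A B) → TS4 A → TS4 B
  | de {i j : ℕ} (hij : i < j) {A : Fm} :
      TS4 A → TS4 (imp (K i A) (K j (K i A)))
  | e (i : ℕ) {A : Fm} : TS4 A → TS4 (K i A)

/-- Derivability in tS4 from a list of hypotheses. -/
inductive Deriv (Γ : List Fm) : Fm → Prop
  | hyp {A : Fm} : A ∈ Γ → Deriv Γ A
  | thm {A : Fm} : TS4 A → Deriv Γ A
  | mp {A B : Fm} : Deriv Γ (imp A B) → Deriv Γ A → Deriv Γ B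


/-!
Knowing `φ` at time 1, the student knows at time 2 that `¬E₁ → E₂`. If the test were on
Wednesday (`E₂`), the student would know `¬E₁` at time 11, hence `E₂` at time 12,
contradicting the surprise clause for `E₂`. So `K¹φ` alone yields `E₁`; by introspection
the student knows `K¹φ` at time 2, hence `E₁` at time 3, contradicting the surprise clause
for `E₁`.
-/

theorem TS4.imp_self (A : Fm) : TS4 (imp A A) :=
  TS4.mp (TS4.mp (TS4.ax2 A (imp A A) A) (TS4.ax1 A (imp A A))) (TS4.ax1 A A)

theorem TS4.of_deriv_nil {A : Fm} (h : Deriv [] A) : TS4 A := by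
  induction h with
  | hyp h => simp at h
  | thm h => exact h
  | mp _ _ ih₁ ih₂ => exact TS4.mp ih₁ ih₂

namespace Deriv

variable {Γ Δ : List Fm} {A B : Fm}

theorem mono (h : Deriv Γ A) (hΓ : Γ ⊆ Δ) : Deriv Δ A := by
  induction h with
  | hyp h => exact hyp (hΓ h)
  | thm h => exact thm h
  | mp _ _ ih₁ ih₂ => exact mp ih₁ ih₂

theorem deduction (h : Deriv (A :: Γ) B) : Deriv Γ (imp A B) := by
  induction h with
  | hyp h =>
    rcases List.mem_cons.mp h with rfl | h
    · exact thm (TS4.imp_self _)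
    · exact mp (thm (TS4.ax1 _ _)) (hyp h)
  | thm h => exact mp (thm (TS4.ax1 _ _)) (thm h)
  | mp _ _ ih₁ ih₂ => exact mp (mp (thm (TS4.ax2 _ _ _)) ih₁) ih₂

theorem of_bot (h : Deriv Γ bot) : Deriv Γ A := by
  have hnn : Deriv Γ (imp (neg A) (neg bot)) := mp (thm (TS4.ax1 _ _)) (thm (TS4.imp_self bot))
  exact mp (mp (thm (TS4.ax3 A bot)) hnn) h

theorem by_contra (h : Deriv (neg A :: Γ) bot) : Deriv Γ A := by
  have hnnn : Deriv [] (imp (neg A) (neg (neg (neg A)))) :=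
    deduction <| deduction <|
      mp (hyp (show neg (neg A) ∈ _ by simp)) (hyp (show neg A ∈ _ by simp))
  exact mp (mp (thm (TS4.ax3 A _)) (hnnn.mono (List.nil_subset _))) (deduction h)

theorem conj_left (h : Deriv Γ (conj A B)) : Deriv Γ A :=
  by_contra <| mp (h.mono (List.subset_cons_self _ _)) <|
    deduction <| of_bot <| mp (hyp (show neg A ∈ _ by simp)) (hyp (show A ∈ _ by simp))

theorem conj_right (h : Deriv Γ (conj A B)) : Deriv Γ B :=
  by_contra <| mp (h.mono (List.subset_cons_self _ _)) <|
    deduction <| hyp (show neg B ∈ _ by simp)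

theorem of_bigConj {l : List Fm} (h : Deriv Γ (bigConj l)) (hA : A ∈ l) : Deriv Γ A := by
  induction l with
  | nil => simp at hA
  | cons C l ih =>
    rcases List.mem_cons.mp hA with rfl | hA
    · exact conj_left h
    · exact ih (conj_right h) hA

theorem of_K {i : ℕ} (h : Deriv Γ (K i A)) : Deriv Γ A :=
  mp (thm (TS4.tT i A)) h

theorem K_mp {i j k : ℕ} (hik : i < k) (hjk : j < k) (hAB : Deriv Γ (K i (imp A B)))
    (hA : Deriv Γ (K j A)) : Deriv Γ (K k B) :=
  mp (mp (thm (TS4.tk hik hjk A B)) hAB) hA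

theorem K_of_K {i k : ℕ} (hAB : Deriv [A] B) (hik : i < k) (hA : Deriv Γ (K i A)) :
    Deriv Γ (K k B) :=
  K_mp (Nat.zero_lt_of_lt hik) hik (thm (TS4.e 0 (TS4.of_deriv_nil hAB.deduction))) hA

variable {E₁ E₂ : Fm}

theorem disj_of_phi (h : Deriv Γ (phi E₁ E₂)) : Deriv Γ (disj E₁ E₂) :=
  conj_left (conj_left h)

theorem not_K_left_of_phi (h : Deriv Γ (phi E₁ E₂)) (h₁ : Deriv Γ E₁) {i : ℕ}
    (hi : i < 10) : Deriv Γ (neg (K i E₁)) :=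
  of_bigConj (mp (conj_left (conj_right h)) h₁) (List.mem_map.mpr ⟨i, by simpa, rfl⟩)

theorem not_K_right_of_phi (h : Deriv Γ (phi E₁ E₂)) (h₂ : Deriv Γ E₂) {i : ℕ}
    (hi : i < 20) : Deriv Γ (neg (K i E₂)) :=
  of_bigConj (conj_left (mp (conj_right (conj_right h)) h₂))
    (List.mem_map.mpr ⟨i, by simpa, rfl⟩)

theorem K_not_left_of_phi (h : Deriv Γ (phi E₁ E₂)) (h₂ : Deriv Γ E₂) {i : ℕ}
    (hi₁ : 10 < i) (hi₂ : i ≤ 20) : Deriv Γ (K i (neg E₁)) :=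
  of_bigConj (conj_right (mp (conj_right (conj_right h)) h₂))
    (List.mem_map.mpr ⟨i - 11, by simp; omega, by congr 1; omega⟩)

theorem not_right_of_K_one_phi : Deriv [K 1 (phi E₁ E₂)] (neg E₂) := by
  refine deduction ?_
  have hK : Deriv [E₂, K 1 (phi E₁ E₂)] (K 1 (phi E₁ E₂)) := hyp (by simp)
  have h₂ : Deriv [E₂, K 1 (phi E₁ E₂)] E₂ := hyp (by simp)
  have hdisj : Deriv _ (K 2 (disj E₁ E₂)) := K_of_K (disj_of_phi (hyp (by simp))) one_lt_two hK
  have hK₁₁ : Deriv _ (K 11 (neg E₁)) :=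
    K_not_left_of_phi hK.of_K h₂ (by norm_num) (by norm_num)
  have hK₁₂ : Deriv _ (K 12 E₂) := K_mp (by norm_num) (by norm_num) hdisj hK₁₁
  exact mp (not_K_right_of_phi hK.of_K h₂ (by norm_num)) hK₁₂

theorem left_of_K_one_phi : Deriv [K 1 (phi E₁ E₂)] E₁ := by
  refine by_contra (mp (not_right_of_K_one_phi.mono (List.subset_cons_self _ _)) ?_)
  exact mp (disj_of_phi (hyp (show K 1 (phi E₁ E₂) ∈ _ by simp)).of_K)
    (hyp (show neg E₁ ∈ _ by simp))

end Deriv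

/-- In tS4, the hypothesis `K¹φ` (the student knows the teacher's announcement
at time 1) yields a contradiction; hence tS4 proves `¬K¹φ`. -/
theorem surprise_test_tS4 (E₁ E₂ : Fm) :
    Deriv [K 1 (phi E₁ E₂)] bot ∧ TS4 (neg (K 1 (phi E₁ E₂))) := by
  have hK : Deriv [K 1 (phi E₁ E₂)] (K 1 (phi E₁ E₂)) := .hyp (by simp)
  have hKK : Deriv _ (K 2 (K 1 (phi E₁ E₂))) := .mp (.thm (TS4.t4 one_lt_two _)) hK
  have hK₃ : Deriv _ (K 3 E₁) := Deriv.K_of_K Deriv.left_of_K_one_phi (by norm_num) hKK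
  have hnK₃ : Deriv _ (neg (K 3 E₁)) :=
    Deriv.not_K_left_of_phi hK.of_K Deriv.left_of_K_one_phi (by norm_num)
  have hbot := Deriv.mp hnK₃ hK₃
  exact ⟨hbot, TS4.of_deriv_nil hbot.deduction⟩
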